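/- arXiv:2008.10934 — 3 statements merged into one kernel-verified Lean document; each statement's English description precedes it below -/
import Mathlib

section
/- Let E be a metric space with a Borel measure 𝔪 satisfying 𝔪(B_r(x)) ≤ C r^ν for all x ∈ E and 0 < r ≤ 2, for some constants C, ν > 0. Let α, γ > 0 and q ≥ 1 with α < γq. If a measurable function f : E → ℝ satisfies sup_{x∈E} ∫_{d(x,y)≤1} |f(y)|^q / d(x,y)^{ν-α} d𝔪(y) < ∞, then sup_{x∈E} ∫_{d(x,y)≤1} |f(y)| / d(x,y)^{ν-γ} d𝔪(y) < ∞. -/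
/-!
Write `|f y| d^(γ-ν) = (|f y| d^((α-ν)/q)) · d^(γ-ν-(α-ν)/q)` with `d = dist x y` and apply
Young's inequality with exponents `q` and `q/(q-1)`: the first factor contributes the assumed
integral, the second `d^(a-ν)` with `a = (γq-α)/(q-1) > 0`. On the dyadic annulus
`2^(-k-1) < d ≤ 2^(-k)` the volume bound gives `∫ d^(a-ν) ≤ C 4^ν 2^(-ka)`, a geometric series,
so `∫_{d ≤ 1} d^(a-ν)` is bounded uniformly in `x`. For `q = 1` the claim is the monotonicity
of `d ↦ d^(α-γ)` on `(0, 1]`.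
-/

open MeasureTheory Metric Set Filter Topology

lemma div_rpow_le_rpow_div_rpow_add_rpow {q : ℝ} (hq : 1 < q) (α γ ν : ℝ) {s t : ℝ}
    (hs : 0 ≤ s) (ht : 0 < t) :
    s / t ^ (ν - γ) ≤ s ^ q / t ^ (ν - α) + t ^ ((γ * q - α) / (q - 1) - ν) := by
  have hpq := Real.HolderConjugate.conjExponent hq
  have hq0 : q ≠ 0 := by positivity
  have hq1 : q - 1 ≠ 0 := by linarith
  calc s / t ^ (ν - γ) = s * t ^ ((α - ν) / q) * t ^ (γ - ν - (α - ν) / q) := by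
        rw [mul_assoc, ← Real.rpow_add ht, div_eq_mul_inv, ← Real.rpow_neg ht.le]
        ring_nf
    _ ≤ (s * t ^ ((α - ν) / q)) ^ q / q
          + (t ^ (γ - ν - (α - ν) / q)) ^ q.conjExponent / q.conjExponent :=
        Real.young_inequality_of_nonneg (by positivity) (by positivity) hpq
    _ ≤ (s * t ^ ((α - ν) / q)) ^ q + (t ^ (γ - ν - (α - ν) / q)) ^ q.conjExponent :=
        add_le_add (div_le_self (by positivity) hq.le) (div_le_self (by positivity) hpq.symm.lt.le)
    _ = s ^ q / t ^ (ν - α) + t ^ ((γ * q - α) / (q - 1) - ν) := by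
        rw [Real.mul_rpow hs (by positivity), ← Real.rpow_mul ht.le, ← Real.rpow_mul ht.le,
          div_eq_mul_inv (s ^ q), ← Real.rpow_neg ht.le, Real.conjExponent]
        congr 3 <;> field_simp <;> ring

lemma exists_pos_div_rpow_le_add {α γ ν q : ℝ} (hq : 1 ≤ q) (hαγq : α < γ * q) :
    ∃ a > 0, ∀ s t : ℝ, 0 ≤ s → 0 < t → t ≤ 1 →
      s / t ^ (ν - γ) ≤ s ^ q / t ^ (ν - α) + t ^ (a - ν) := by
  rcases hq.eq_or_lt with rfl | hq
  · refine ⟨1, one_pos, fun s t hs ht ht1 => ?_⟩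
    rw [Real.rpow_one]
    refine le_add_of_le_of_nonneg ?_ (by positivity)
    exact div_le_div_of_nonneg_left hs (by positivity)
      (Real.rpow_le_rpow_of_exponent_ge ht ht1 (by linarith))
  · exact ⟨(γ * q - α) / (q - 1), div_pos (by linarith) (by linarith),
      fun s t hs ht _ => div_rpow_le_rpow_div_rpow_add_rpow hq α γ ν hs ht⟩

section VolumeGrowth

variable {E : Type*} [MetricSpace E] [MeasurableSpace E] {m : Measure E} {C ν : ℝ}

lemma nullSingletonClass_of_measure_ball_le (hν : 0 < ν)
    (hvol : ∀ (x : E) (r : ℝ), 0 < r → r ≤ 2 → m (ball x r) ≤ ENNReal.ofReal (C * r ^ ν)) :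
    NullSingletonClass m := by
  have hcont : ContinuousAt (fun r : ℝ => ENNReal.ofReal (C * r ^ ν)) 0 :=
    ENNReal.continuous_ofReal.continuousAt.comp
      (continuousAt_const.mul (Real.continuousAt_rpow_const 0 ν (Or.inr hν.le)))
  have htend : Tendsto (fun r : ℝ => ENNReal.ofReal (C * r ^ ν)) (𝓝[>] 0) (𝓝 0) := by
    simpa [Real.zero_rpow hν.ne'] using hcont.tendsto.mono_left nhdsWithin_le_nhds
  refine ⟨fun x => le_antisymm (ge_of_tendsto htend ?_) zero_le⟩
  filter_upwards [Ioo_mem_nhdsGT two_pos] with r hr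
  exact (measure_mono (singleton_subset_iff.2 (mem_ball_self hr.1))).trans (hvol x r hr.1 hr.2.le)

lemma setLIntegral_dist_rpow_annulus_le
    (hvol : ∀ (x : E) (r : ℝ), 0 < r → r ≤ 2 → m (ball x r) ≤ ENNReal.ofReal (C * r ^ ν))
    (hν : 0 ≤ ν) {a : ℝ} (ha : 0 ≤ a) (x : E) {r : ℝ} (hr : 0 < r) (hr1 : r ≤ 1) :
    ∫⁻ y in {y | r / 2 < dist x y ∧ dist x y ≤ r}, ENNReal.ofReal (dist x y ^ (a - ν)) ∂m
      ≤ ENNReal.ofReal (C * 4 ^ ν) * ENNReal.ofReal (r ^ a) := by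
  set A := {y | r / 2 < dist x y ∧ dist x y ≤ r}
  have hpt : ∀ y ∈ A,
      ENNReal.ofReal (dist x y ^ (a - ν)) ≤ ENNReal.ofReal (r ^ a / (r / 2) ^ ν) := by
    rintro y ⟨hlo, hhi⟩
    have hd : 0 < dist x y := (half_pos hr).trans hlo
    rw [Real.rpow_sub hd]
    gcongr
  have hA : m A ≤ ENNReal.ofReal (C * (2 * r) ^ ν) := by
    refine (measure_mono fun y hy => ?_).trans (hvol x _ (by positivity) (by linarith))
    rw [mem_ball, dist_comm]
    linarith [hy.2]
  have hratio : (2 * r) ^ ν / (r / 2) ^ ν = 4 ^ ν := by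
    rw [← Real.div_rpow (by positivity) (by positivity)]
    congr 1
    field_simp
    norm_num
  calc ∫⁻ y in A, ENNReal.ofReal (dist x y ^ (a - ν)) ∂m
      ≤ ∫⁻ _ in A, ENNReal.ofReal (r ^ a / (r / 2) ^ ν) ∂m := setLIntegral_mono measurable_const hpt
    _ = ENNReal.ofReal (r ^ a / (r / 2) ^ ν) * m A := setLIntegral_const _ _
    _ ≤ ENNReal.ofReal (r ^ a / (r / 2) ^ ν) * ENNReal.ofReal (C * (2 * r) ^ ν) := by gcongr
    _ = ENNReal.ofReal (C * 4 ^ ν) * ENNReal.ofReal (r ^ a) := by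
        rw [← ENNReal.ofReal_mul (by positivity), mul_comm _ (ENNReal.ofReal _),
          ← ENNReal.ofReal_mul (by positivity), ← hratio]
        congr 1
        field_simp

lemma iSup_setLIntegral_dist_rpow_lt_top [NullSingletonClass m]
    (hvol : ∀ (x : E) (r : ℝ), 0 < r → r ≤ 2 → m (ball x r) ≤ ENNReal.ofReal (C * r ^ ν))
    (hν : 0 ≤ ν) {a : ℝ} (ha : 0 < a) :
    (⨆ x : E, ∫⁻ y in {y | dist x y ≤ 1}, ENNReal.ofReal (dist x y ^ (a - ν)) ∂m) < ⊤ := by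
  set ρ : ℝ := (1 / 2) ^ a
  have hρ : ρ < 1 := Real.rpow_lt_one (by norm_num) (by norm_num) ha
  have hsum : Summable fun k : ℕ => ρ ^ k := summable_geometric_of_lt_one (by positivity) hρ
  refine lt_of_le_of_lt (iSup_le fun x => ?_)
    (ENNReal.mul_lt_top (ENNReal.ofReal_lt_top (r := C * 4 ^ ν))
      (ENNReal.ofReal_lt_top (r := ∑' k : ℕ, ρ ^ k)))
  set A : ℕ → Set E := fun k => {y | (1 / 2) ^ k / 2 < dist x y ∧ dist x y ≤ (1 / 2) ^ k}
  have hcover : {y | dist x y ≤ 1} ⊆ {x} ∪ ⋃ k, A k := by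
    intro y hy
    rcases eq_or_ne y x with rfl | hne
    · exact Or.inl rfl
    obtain ⟨k, hlo, hhi⟩ := exists_nat_pow_near_of_lt_one (dist_pos.2 hne.symm) hy
      (by norm_num) (by norm_num : (1 / 2 : ℝ) < 1)
    exact Or.inr (mem_iUnion.2 ⟨k, by rwa [pow_succ, ← div_eq_mul_one_div] at hlo, hhi⟩)
  calc ∫⁻ y in {y | dist x y ≤ 1}, ENNReal.ofReal (dist x y ^ (a - ν)) ∂m
      ≤ ∫⁻ y in {x} ∪ ⋃ k, A k, ENNReal.ofReal (dist x y ^ (a - ν)) ∂m :=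
        lintegral_mono_set hcover
    _ ≤ (∫⁻ y in {x}, ENNReal.ofReal (dist x y ^ (a - ν)) ∂m)
        + ∫⁻ y in ⋃ k, A k, ENNReal.ofReal (dist x y ^ (a - ν)) ∂m := lintegral_union_le _ _ _
    _ = ∫⁻ y in ⋃ k, A k, ENNReal.ofReal (dist x y ^ (a - ν)) ∂m := by
        rw [Measure.restrict_singleton', lintegral_zero_measure, zero_add]
    _ ≤ ∑' k, ∫⁻ y in A k, ENNReal.ofReal (dist x y ^ (a - ν)) ∂m := lintegral_iUnion_le _ _
    _ ≤ ∑' k : ℕ, ENNReal.ofReal (C * 4 ^ ν) * ENNReal.ofReal (ρ ^ k) := by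
        refine ENNReal.tsum_le_tsum fun k => ?_
        rw [Real.rpow_pow_comm (by norm_num)]
        exact setLIntegral_dist_rpow_annulus_le hvol hν ha.le x (by positivity)
          (pow_le_one₀ (by norm_num) (by norm_num))
    _ = ENNReal.ofReal (C * 4 ^ ν) * ENNReal.ofReal (∑' k : ℕ, ρ ^ k) := by
        rw [ENNReal.tsum_mul_left, ENNReal.ofReal_tsum_of_nonneg (fun k => by positivity) hsum]

end VolumeGrowth

theorem stmt3_general {E : Type*} [MetricSpace E] [MeasurableSpace E] [BorelSpace E]
    (m : Measure E) (C ν α γ q : ℝ) (hν : 0 < ν)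
    (hvol : ∀ (x : E) (r : ℝ), 0 < r → r ≤ 2 → m (ball x r) ≤ ENNReal.ofReal (C * r ^ ν))
    (hq : 1 ≤ q) (hαγq : α < γ * q)
    (f : E → ℝ)
    (hM : (⨆ x : E, ∫⁻ y in {y | dist x y ≤ 1},
      ENNReal.ofReal (|f y| ^ q / (dist x y) ^ (ν - α)) ∂m) < ⊤) :
    (⨆ x : E, ∫⁻ y in {y | dist x y ≤ 1},
      ENNReal.ofReal (|f y| / (dist x y) ^ (ν - γ)) ∂m) < ⊤ := by
  have := nullSingletonClass_of_measure_ball_le hν hvol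
  obtain ⟨a, ha, hpt⟩ := exists_pos_div_rpow_le_add (ν := ν) hq hαγq
  refine lt_of_le_of_lt (iSup_le fun x => ?_)
    (ENNReal.add_lt_top.2 ⟨hM, iSup_setLIntegral_dist_rpow_lt_top hvol hν.le ha⟩)
  have hball : MeasurableSet {y | dist x y ≤ 1} := measurableSet_le (by fun_prop) measurable_const
  calc ∫⁻ y in {y | dist x y ≤ 1}, ENNReal.ofReal (|f y| / dist x y ^ (ν - γ)) ∂m
      ≤ ∫⁻ y in {y | dist x y ≤ 1}, (ENNReal.ofReal (|f y| ^ q / dist x y ^ (ν - α))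
          + ENNReal.ofReal (dist x y ^ (a - ν))) ∂m := by
        refine setLIntegral_mono_ae' hball ?_
        filter_upwards [Measure.ae_ne m x] with y hyx hy
        rw [← ENNReal.ofReal_add (by positivity) (by positivity)]
        exact ENNReal.ofReal_le_ofReal (hpt _ _ (abs_nonneg _) (dist_pos.2 hyx.symm) hy)
    _ = (∫⁻ y in {y | dist x y ≤ 1}, ENNReal.ofReal (|f y| ^ q / dist x y ^ (ν - α)) ∂m)
          + ∫⁻ y in {y | dist x y ≤ 1}, ENNReal.ofReal (dist x y ^ (a - ν)) ∂m :=
        lintegral_add_right _ (by fun_prop)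
    _ ≤ _ := add_le_add (le_iSup_of_le x le_rfl) (le_iSup_of_le x le_rfl)

theorem stmt3 {E : Type*} [MetricSpace E] [MeasurableSpace E] [BorelSpace E]
    (m : Measure E) (C ν α γ q : ℝ) (hC : 0 < C) (hν : 0 < ν)
    (hvol : ∀ (x : E) (r : ℝ), 0 < r → r ≤ 2 → m (ball x r) ≤ ENNReal.ofReal (C * r ^ ν))
    (hα : 0 < α) (hγ : 0 < γ) (hq : 1 ≤ q) (hαγq : α < γ * q)
    (f : E → ℝ) (hf : Measurable f)
    (hM : (⨆ x : E, ∫⁻ y in {y | dist x y ≤ 1},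
      ENNReal.ofReal (|f y| ^ q / (dist x y) ^ (ν - α)) ∂m) < ⊤) :
    (⨆ x : E, ∫⁻ y in {y | dist x y ≤ 1},
      ENNReal.ofReal (|f y| / (dist x y) ^ (ν - γ)) ∂m) < ⊤ :=
  stmt3_general m C ν α γ q hν hvol hq hαγq f hM
end

section
/- Let E be a metric space, ν ≥ β > 0, p ≥ 1 with ν - p(ν-β) > 0, and γ ∈ ]0, ν - p(ν-β)[. Suppose ν > β and let f : E → [0,∞] be measurable with sup_{x∈E} ∫_{B_1(x)} f(y) / d(x,y)^{ν-γ} d𝔪(y) < ∞ for a Borel measure 𝔪. Then lim_{r→0} sup_{x∈E} ∫_{B_r(x)} f(y) / d(x,y)^{p(ν-β)} d𝔪(y) = 0. -/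
/-!
Write `a = p (ν - β)` and `b = ν - γ`, so that `b - a > 0`. On `B_r(x)` with `r ≤ 1` the kernel
`d(x,y)^{-a}` is at most `r^{b-a} d(x,y)^{-b}`, hence the supremum over `x` of the integrals over
`B_r(x)` is at most `r^{b-a}` times the finite supremum over the unit balls, and tends to `0`.
-/

open MeasureTheory Metric Set Filter

namespace Real

lemma rpow_neg_le_rpow_sub_mul_rpow_neg {a b t r : ℝ} (ha : 0 < a) (hab : a ≤ b)
    (ht : 0 ≤ t) (htr : t ≤ r) : t ^ (-a) ≤ r ^ (b - a) * t ^ (-b) := by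
  rcases ht.eq_or_lt with rfl | ht
  · rw [zero_rpow (neg_ne_zero.mpr ha.ne')]
    exact mul_nonneg (rpow_nonneg htr _) (rpow_nonneg le_rfl _)
  · calc t ^ (-a) = t ^ (b - a) * t ^ (-b) := by rw [← rpow_add ht]; ring_nf
      _ ≤ r ^ (b - a) * t ^ (-b) := by gcongr

end Real

section BallPotential

variable {E : Type*} [PseudoMetricSpace E] [MeasurableSpace E]

/-- The measure `f dm` is of Kato class for the kernel `d^{-s}` exactly when this tends to `0`
as `r → 0⁺`. -/
noncomputable def ballPotentialSup (m : Measure E) (f : E → ENNReal) (s r : ℝ) : ENNReal :=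
  ⨆ x : E, ∫⁻ y in ball x r, f y * ENNReal.ofReal (dist x y ^ (-s)) ∂m

variable (m : Measure E) (f : E → ENNReal)

lemma ballPotentialSup_mono {s r r' : ℝ} (hr : r ≤ r') :
    ballPotentialSup m f s r ≤ ballPotentialSup m f s r' :=
  iSup_mono fun _ => lintegral_mono_set (ball_subset_ball hr)

variable [OpensMeasurableSpace E]

lemma ballPotentialSup_le_rpow_mul {a b : ℝ} (ha : 0 < a) (hab : a ≤ b) (r : ℝ) :
    ballPotentialSup m f a r ≤ ENNReal.ofReal (r ^ (b - a)) * ballPotentialSup m f b r := by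
  refine iSup_le fun x => ?_
  calc ∫⁻ y in ball x r, f y * ENNReal.ofReal (dist x y ^ (-a)) ∂m
      ≤ ∫⁻ y in ball x r, ENNReal.ofReal (r ^ (b - a)) *
          (f y * ENNReal.ofReal (dist x y ^ (-b))) ∂m := by
        refine setLIntegral_mono' measurableSet_ball fun y hy => ?_
        rw [mul_left_comm, ← ENNReal.ofReal_mul' (Real.rpow_nonneg dist_nonneg _)]
        gcongr
        exact Real.rpow_neg_le_rpow_sub_mul_rpow_neg ha hab dist_nonneg
          (mem_ball'.mp hy).le
    _ = ENNReal.ofReal (r ^ (b - a)) *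
          ∫⁻ y in ball x r, f y * ENNReal.ofReal (dist x y ^ (-b)) ∂m :=
        lintegral_const_mul' _ _ ENNReal.ofReal_ne_top
    _ ≤ ENNReal.ofReal (r ^ (b - a)) * ballPotentialSup m f b r :=
        mul_le_mul_right (le_iSup (fun x => ∫⁻ y in ball x r,
          f y * ENNReal.ofReal (dist x y ^ (-b)) ∂m) x) _

lemma tendsto_ballPotentialSup_nhdsGT_zero {a b : ℝ} (ha : 0 < a) (hab : a < b)
    (hfin : ballPotentialSup m f b 1 < ⊤) :
    Tendsto (ballPotentialSup m f a) (nhdsWithin 0 (Ioi 0)) (nhds 0) := by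
  have hrpow : Tendsto (fun r : ℝ => ENNReal.ofReal (r ^ (b - a))) (nhdsWithin 0 (Ioi 0))
      (nhds 0) := by
    have := (Real.continuousAt_rpow_const 0 (b - a) (Or.inr (sub_nonneg.mpr hab.le))).tendsto
    rw [Real.zero_rpow (sub_pos.mpr hab).ne'] at this
    simpa using (ENNReal.tendsto_ofReal this).mono_left nhdsWithin_le_nhds
  have hbound := ENNReal.Tendsto.mul_const hrpow (Or.inr hfin.ne)
  rw [zero_mul] at hbound
  refine tendsto_of_tendsto_of_tendsto_of_le_of_le' tendsto_const_nhds hbound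
    (Eventually.of_forall fun _ => zero_le) ?_
  filter_upwards [Ioc_mem_nhdsGT zero_lt_one] with r hr
  calc ballPotentialSup m f a r
      ≤ ENNReal.ofReal (r ^ (b - a)) * ballPotentialSup m f b r :=
        ballPotentialSup_le_rpow_mul m f ha hab.le r
    _ ≤ ENNReal.ofReal (r ^ (b - a)) * ballPotentialSup m f b 1 := by
        gcongr
        exact ballPotentialSup_mono m f hr.2

end BallPotential

theorem stmt4_general {E : Type*} [MetricSpace E] [MeasurableSpace E] [BorelSpace E]
    (m : Measure E) (ν β p γ : ℝ) (hνβ : β < ν) (hp : 1 ≤ p)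
    (hγ : γ < ν - p * (ν - β))
    (f : E → ENNReal)
    (hM : (⨆ x : E, ∫⁻ y in ball x 1,
      f y * ENNReal.ofReal ((dist x y) ^ (-(ν - γ))) ∂m) < ⊤) :
    Tendsto
      (fun r : ℝ => ⨆ x : E, ∫⁻ y in ball x r,
        f y * ENNReal.ofReal ((dist x y) ^ (-(p * (ν - β)))) ∂m)
      (nhdsWithin 0 (Set.Ioi 0)) (nhds 0) :=
  tendsto_ballPotentialSup_nhdsGT_zero m f (mul_pos (by linarith) (sub_pos.mpr hνβ))
    (by linarith) hM

theorem stmt4 {E : Type*} [MetricSpace E] [MeasurableSpace E] [BorelSpace E]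
    (m : Measure E) (ν β p γ : ℝ) (hβ : 0 < β) (hνβ : β < ν) (hp : 1 ≤ p)
    (hpνβ : 0 < ν - p * (ν - β)) (hγ0 : 0 < γ) (hγ : γ < ν - p * (ν - β))
    (f : E → ENNReal) (hf : Measurable f)
    (hM : (⨆ x : E, ∫⁻ y in ball x 1,
      f y * ENNReal.ofReal ((dist x y) ^ (-(ν - γ))) ∂m) < ⊤) :
    Tendsto
      (fun r : ℝ => ⨆ x : E, ∫⁻ y in ball x r,
        f y * ENNReal.ofReal ((dist x y) ^ (-(p * (ν - β)))) ∂m)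
      (nhdsWithin 0 (Set.Ioi 0)) (nhds 0) :=
  stmt4_general m ν β p γ hνβ hp hγ f hM
end

section
/- Let d ≥ 3, p ∈ [1, d/(d-2)[, and let V : ℝ^d → ℝ be measurable such that ∫_a^∞ m(|V| ≥ t)^{(d-p(d-2))/d} dt < ∞ for some a > 0, where m is Lebesgue measure and m(|V| ≥ t) := m({x : |V(x)| ≥ t}). Assume additionally that |V| equals its symmetric decreasing rearrangement, i.e. |V|(x) = f(|x|) for a decreasing continuous function f on ]0,∞[ with 0 < f⁻¹(t) < ∞ for all t > 0. Then (d-p(d-2)) ∫₀^{f⁻¹(a)} f(r) r^{d-p(d-2)-1} dr ≤ a (f⁻¹(a))^{d-p(d-2)} + ∫_a^∞ (f⁻¹(t))^{d-p(d-2)} dt < ∞. -/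
open MeasureTheory Set

theorem stmt18 (d : ℕ) (hd : 3 ≤ d) (p : ℝ) (hp1 : 1 ≤ p)
    (hp2 : p < (d : ℝ) / ((d : ℝ) - 2))
    (V : EuclideanSpace ℝ (Fin d) → ℝ) (hV : Measurable V)
    (a : ℝ) (ha : 0 < a)
    (hdist : (∫⁻ t in Ioi a,
      (volume {x : EuclideanSpace ℝ (Fin d) | t ≤ |V x|}) ^
        (((d : ℝ) - p * ((d : ℝ) - 2)) / (d : ℝ))) < ⊤)
    (f : ℝ → ℝ)
    (hVf : ∀ x : EuclideanSpace ℝ (Fin d), |V x| = f ‖x‖)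
    (hfdec : ∀ s t, 0 < s → s ≤ t → f t ≤ f s)
    (hfcont : ContinuousOn f (Ioi 0))
    (finv : ℝ → ℝ)
    (hfinv : ∀ t, 0 < t → finv t = sSup {s : ℝ | 0 < s ∧ t < f s})
    (hfinvpos : ∀ t, 0 < t → 0 < finv t) :
    (ENNReal.ofReal ((d : ℝ) - p * ((d : ℝ) - 2)) *
      (∫⁻ r in Ioc (0:ℝ) (finv a),
        ENNReal.ofReal (f r * r ^ ((d : ℝ) - p * ((d : ℝ) - 2) - 1)))
      ≤ ENNReal.ofReal (a * (finv a) ^ ((d : ℝ) - p * ((d : ℝ) - 2))) +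
        ∫⁻ t in Ioi a, ENNReal.ofReal ((finv t) ^ ((d : ℝ) - p * ((d : ℝ) - 2))))
    ∧ (ENNReal.ofReal (a * (finv a) ^ ((d : ℝ) - p * ((d : ℝ) - 2))) +
        ∫⁻ t in Ioi a, ENNReal.ofReal ((finv t) ^ ((d : ℝ) - p * ((d : ℝ) - 2)))) < ⊤ := by
  set β : ℝ := (d : ℝ) - p * ((d : ℝ) - 2) with hβdef
  have hd2 : (0:ℝ) < (d:ℝ) - 2 := by
    have : (3:ℝ) ≤ (d:ℝ) := by exact_mod_cast hd
    linarith
  have hdpos : (0:ℝ) < (d:ℝ) := by linarith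
  have hβ : 0 < β := by
    have h := (lt_div_iff₀ hd2).mp hp2
    simp only [hβdef]; linarith
  haveI : Nonempty (Fin d) := ⟨⟨0, by omega⟩⟩
  -- f is nonnegative on positive reals
  have hf0 : ∀ r : ℝ, 0 < r → 0 ≤ f r := by
    intro r hr
    have hx : ‖(r • EuclideanSpace.single (⟨0, by omega⟩ : Fin d) (1:ℝ) :
        EuclideanSpace ℝ (Fin d))‖ = r := by
      rw [norm_smul, EuclideanSpace.norm_single]
      simp [abs_of_pos hr]
    calc (0:ℝ) ≤ |V (r • EuclideanSpace.single (⟨0, by omega⟩ : Fin d) (1:ℝ))| := abs_nonneg _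
      _ = f r := by rw [hVf, hx]
  -- the superlevel parameter set is nonempty and bounded above
  have hSne : ∀ t, 0 < t → ({s : ℝ | 0 < s ∧ t < f s}).Nonempty ∧
      BddAbove {s : ℝ | 0 < s ∧ t < f s} := by
    intro t ht
    have hpos := hfinvpos t ht
    rw [hfinv t ht] at hpos
    constructor
    · rcases Set.eq_empty_or_nonempty {s : ℝ | 0 < s ∧ t < f s} with h | h
      · rw [h, Real.sSup_empty] at hpos; exact absurd hpos (lt_irrefl 0)
      · exact h
    · by_contra hb
      rw [Real.sSup_of_not_bddAbove hb] at hpos; exact absurd hpos (lt_irrefl 0)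
  have hle_finv : ∀ t r, 0 < t → 0 < r → t < f r → r ≤ finv t := by
    intro t r ht hr hfr
    rw [hfinv t ht]
    exact le_csSup (hSne t ht).2 ⟨hr, hfr⟩
  have hlt_f : ∀ t s, 0 < t → 0 < s → s < finv t → t < f s := by
    intro t s ht hs hlt
    rw [hfinv t ht] at hlt
    obtain ⟨u, hu, hsu⟩ := exists_lt_of_lt_csSup (hSne t ht).1 hlt
    exact lt_of_lt_of_le hu.2 (hfdec s u hs hsu.le)
  set R := finv a with hRdef
  have hR : 0 < R := hfinvpos a ha
  -- the elementary integral
  have hkey : ∀ M : ℝ, 0 ≤ M →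
      ∫⁻ r in Ioc (0:ℝ) M, ENNReal.ofReal (r ^ (β - 1)) = ENNReal.ofReal (M ^ β / β) := by
    intro M hM
    have hint : IntegrableOn (fun r : ℝ => r ^ (β-1)) (Ioc 0 M) volume :=
      (intervalIntegrable_iff_integrableOn_Ioc_of_le hM).mp
        (intervalIntegral.intervalIntegrable_rpow' (by linarith))
    rw [← ofReal_integral_eq_lintegral_ofReal hint ?pos]
    case pos =>
      filter_upwards [ae_restrict_mem measurableSet_Ioc] with r hr
      exact Real.rpow_nonneg hr.1.le _
    congr 1
    rw [← intervalIntegral.integral_of_le hM, integral_rpow (Or.inl (by linarith))]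
    have hb1 : β - 1 + 1 = β := by ring
    rw [hb1, Real.zero_rpow hβ.ne', sub_zero]
  -- measurable version of f on Ioc 0 R
  have haem : AEMeasurable f (volume.restrict (Ioc (0:ℝ) R)) :=
    (hfcont.mono Ioc_subset_Ioi_self).aemeasurable measurableSet_Ioc
  set g := haem.mk f with hgdef
  have hg : Measurable g := haem.measurable_mk
  have hgf : ∀ᵐ r ∂(volume.restrict (Ioc (0:ℝ) R)), f r = g r := haem.ae_eq_mk
  -- layer cake + Tonelli
  have hswap : ∫⁻ r in Ioc (0:ℝ) R, ENNReal.ofReal (f r * r ^ (β-1)) =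
      ∫⁻ t in Ioi (0:ℝ), ∫⁻ r in Ioc (0:ℝ) R,
        (if t < g r then ENNReal.ofReal (r ^ (β-1)) else 0) := by
    have h1 : ∫⁻ r in Ioc (0:ℝ) R, ENNReal.ofReal (f r * r ^ (β-1)) =
        ∫⁻ r in Ioc (0:ℝ) R, ∫⁻ t in Ioi (0:ℝ),
          (if t < g r then ENNReal.ofReal (r ^ (β-1)) else 0) := by
      refine lintegral_congr_ae ?_
      filter_upwards [hgf, ae_restrict_mem measurableSet_Ioc] with r hrg hr
      have e1 : ∀ t : ℝ, (if t < g r then ENNReal.ofReal (r ^ (β-1)) else 0) =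
          (Iio (g r)).indicator (fun _ => ENNReal.ofReal (r ^ (β-1))) t := by
        intro t; simp [Set.indicator_apply, Set.mem_Iio]
      calc ENNReal.ofReal (f r * r ^ (β-1))
          = ENNReal.ofReal (r ^ (β-1)) * ENNReal.ofReal (g r) := by
            rw [ENNReal.ofReal_mul (hf0 r hr.1), hrg, mul_comm]
        _ = ∫⁻ t in Ioi (0:ℝ), (Iio (g r)).indicator
              (fun _ => ENNReal.ofReal (r ^ (β-1))) t := by
            rw [lintegral_indicator measurableSet_Iio, setLIntegral_const,
              Measure.restrict_apply measurableSet_Iio, Set.Iio_inter_Ioi,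
              Real.volume_Ioo, sub_zero]
        _ = ∫⁻ t in Ioi (0:ℝ), (if t < g r then ENNReal.ofReal (r ^ (β-1)) else 0) :=
            lintegral_congr fun t => (e1 t).symm
    have hmeas : AEMeasurable (Function.uncurry fun (r t : ℝ) =>
        (if t < g r then ENNReal.ofReal (r ^ (β-1)) else 0))
        ((volume.restrict (Ioc (0:ℝ) R)).prod (volume.restrict (Ioi (0:ℝ)))) := by
      refine Measurable.aemeasurable ?_
      have : (Function.uncurry fun (r t : ℝ) =>
          (if t < g r then ENNReal.ofReal (r ^ (β-1)) else 0)) =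
          fun q : ℝ × ℝ => if q.2 < g q.1 then ENNReal.ofReal (q.1 ^ (β-1)) else 0 := rfl
      rw [this]
      exact Measurable.ite (measurableSet_lt measurable_snd (hg.comp measurable_fst))
        (by fun_prop) measurable_const
    rw [h1, lintegral_lintegral_swap hmeas]
  -- main inequality
  have hmain : ENNReal.ofReal β * (∫⁻ r in Ioc (0:ℝ) R, ENNReal.ofReal (f r * r ^ (β - 1)))
      ≤ ENNReal.ofReal (a * R ^ β) + ∫⁻ t in Ioi a, ENNReal.ofReal ((finv t) ^ β) := by
    rw [hswap, ← lintegral_const_mul' _ _ ENNReal.ofReal_ne_top]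
    have hptwise : ∀ᵐ t ∂(volume.restrict (Ioi (0:ℝ))),
        ENNReal.ofReal β * ∫⁻ r in Ioc (0:ℝ) R,
          (if t < g r then ENNReal.ofReal (r ^ (β-1)) else 0)
          ≤ ENNReal.ofReal ((min R (finv t)) ^ β) := by
      filter_upwards [ae_restrict_mem measurableSet_Ioi] with t ht
      have ht0 : (0:ℝ) < t := ht
      set M := min R (finv t) with hM
      have hM0 : (0:ℝ) ≤ M := le_min hR.le (hfinvpos t ht0).le
      have hsub : ∫⁻ r in Ioc (0:ℝ) R, (if t < g r then ENNReal.ofReal (r ^ (β-1)) else 0)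
          ≤ ∫⁻ r in Ioc (0:ℝ) R,
            (Ioc (0:ℝ) M).indicator (fun r => ENNReal.ofReal (r ^ (β-1))) r := by
        refine lintegral_mono_ae ?_
        filter_upwards [hgf, ae_restrict_mem measurableSet_Ioc] with r hrg hr
        by_cases hcase : t < g r
        · rw [if_pos hcase]
          have hrM : r ∈ Ioc (0:ℝ) M :=
            ⟨hr.1, le_min hr.2 (hle_finv t r ht0 hr.1 (hrg ▸ hcase))⟩
          rw [Set.indicator_of_mem hrM]
        · simp [hcase]
      have hind : ∫⁻ r in Ioc (0:ℝ) R,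
          (Ioc (0:ℝ) M).indicator (fun r => ENNReal.ofReal (r ^ (β-1))) r
          = ∫⁻ r in Ioc (0:ℝ) M, ENNReal.ofReal (r ^ (β-1)) := by
        rw [lintegral_indicator measurableSet_Ioc, Measure.restrict_restrict measurableSet_Ioc,
          Set.inter_eq_left.mpr (Ioc_subset_Ioc_right (min_le_left _ _))]
      calc ENNReal.ofReal β * ∫⁻ r in Ioc (0:ℝ) R,
            (if t < g r then ENNReal.ofReal (r ^ (β-1)) else 0)
          ≤ ENNReal.ofReal β * ENNReal.ofReal (M ^ β / β) :=
            mul_le_mul_right (hsub.trans_eq (hind.trans (hkey M hM0))) _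
        _ = ENNReal.ofReal (M ^ β) := by
            rw [← ENNReal.ofReal_mul hβ.le]
            congr 1
            field_simp
    refine (lintegral_mono_ae hptwise).trans ?_
    rw [← Ioc_union_Ioi_eq_Ioi ha.le, lintegral_union measurableSet_Ioi (Ioc_disjoint_Ioi le_rfl)]
    refine add_le_add ?_ ?_
    · calc ∫⁻ t in Ioc (0:ℝ) a, ENNReal.ofReal ((min R (finv t)) ^ β)
          ≤ ∫⁻ _ in Ioc (0:ℝ) a, ENNReal.ofReal (R ^ β) := by
            refine lintegral_mono_ae ?_
            filter_upwards [ae_restrict_mem measurableSet_Ioc] with t ht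
            exact ENNReal.ofReal_le_ofReal
              (Real.rpow_le_rpow (le_min hR.le (hfinvpos t ht.1).le) (min_le_left _ _) hβ.le)
        _ = ENNReal.ofReal (a * R ^ β) := by
            rw [setLIntegral_const, Real.volume_Ioc, sub_zero,
              ← ENNReal.ofReal_mul (Real.rpow_nonneg hR.le β), mul_comm (R ^ β) a]
    · refine lintegral_mono_ae ?_
      filter_upwards [ae_restrict_mem measurableSet_Ioi] with t ht
      exact ENNReal.ofReal_le_ofReal
        (Real.rpow_le_rpow (le_min hR.le (hfinvpos t (ha.trans ht)).le)
          (min_le_right _ _) hβ.le)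
  -- finiteness
  set ω := volume (Metric.ball (0 : EuclideanSpace ℝ (Fin d)) 1) with hωdef
  have hω0 : ω ≠ 0 := (Metric.measure_ball_pos volume 0 one_pos).ne'
  have hωtop : ω ≠ ⊤ := measure_ball_lt_top.ne
  have hβd : 0 ≤ β / (d:ℝ) := div_nonneg hβ.le hdpos.le
  set c := ω ^ (β / (d:ℝ)) with hcdef
  have hc0 : c ≠ 0 := (ENNReal.rpow_pos (pos_iff_ne_zero.mpr hω0) hωtop).ne'
  have hctop : c ≠ ⊤ := ENNReal.rpow_ne_top_of_nonneg hβd hωtop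
  have hzero : volume ({(0 : EuclideanSpace ℝ (Fin d))} : Set (EuclideanSpace ℝ (Fin d))) = 0 := by
    rw [← Metric.closedBall_zero, Measure.addHaar_closedBall volume 0 le_rfl,
      finrank_euclideanSpace_fin]
    rw [zero_pow (by omega : d ≠ 0)]
    simp
  have hball : ∀ t, a < t →
      (ENNReal.ofReal ((finv t) ^ β)) * c ≤
        (volume {x : EuclideanSpace ℝ (Fin d) | t ≤ |V x|}) ^ (β / (d:ℝ)) := by
    intro t hat
    have ht : 0 < t := ha.trans hat
    have hx : 0 < finv t := hfinvpos t ht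
    have hsub : Metric.ball (0 : EuclideanSpace ℝ (Fin d)) (finv t) ⊆
        {x : EuclideanSpace ℝ (Fin d) | t ≤ |V x|} ∪ {0} := by
      intro y hy
      by_cases hy0 : y = (0 : EuclideanSpace ℝ (Fin d))
      · exact Or.inr (by simp [hy0])
      · left
        have hny : 0 < ‖y‖ := norm_pos_iff.mpr hy0
        have hlt : ‖y‖ < finv t := by
          simpa [Metric.mem_ball, dist_zero_right] using hy
        have := hlt_f t ‖y‖ ht hny hlt
        simp only [mem_setOf_eq, hVf y]
        exact this.le
    have hvol : volume (Metric.ball (0 : EuclideanSpace ℝ (Fin d)) (finv t)) ≤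
        volume {x : EuclideanSpace ℝ (Fin d) | t ≤ |V x|} := by
      calc volume (Metric.ball (0 : EuclideanSpace ℝ (Fin d)) (finv t))
          ≤ volume ({x : EuclideanSpace ℝ (Fin d) | t ≤ |V x|} ∪ {0}) := measure_mono hsub
        _ ≤ volume {x : EuclideanSpace ℝ (Fin d) | t ≤ |V x|} + volume ({0} :
              Set (EuclideanSpace ℝ (Fin d))) := measure_union_le _ _
        _ = volume {x : EuclideanSpace ℝ (Fin d) | t ≤ |V x|} := by rw [hzero, add_zero]
    calc ENNReal.ofReal ((finv t) ^ β) * c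
        = (volume (Metric.ball (0 : EuclideanSpace ℝ (Fin d)) (finv t))) ^ (β / (d:ℝ)) := by
          rw [Measure.addHaar_ball volume 0 hx.le, finrank_euclideanSpace_fin,
            ENNReal.mul_rpow_of_nonneg _ _ hβd, ← hωdef, ← hcdef]
          congr 1
          rw [ENNReal.ofReal_rpow_of_pos (pow_pos hx d)]
          congr 1
          rw [← Real.rpow_natCast (finv t) d, ← Real.rpow_mul hx.le]
          congr 1
          field_simp
      _ ≤ (volume {x : EuclideanSpace ℝ (Fin d) | t ≤ |V x|}) ^ (β / (d:ℝ)) :=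
          ENNReal.rpow_le_rpow hvol hβd
  have hfin2 : (∫⁻ t in Ioi a, ENNReal.ofReal ((finv t) ^ β)) < ⊤ := by
    have hle : ∫⁻ t in Ioi a, ENNReal.ofReal ((finv t) ^ β)
        ≤ ∫⁻ t in Ioi a, c⁻¹ *
          ((volume {x : EuclideanSpace ℝ (Fin d) | t ≤ |V x|}) ^ (β / (d:ℝ))) := by
      refine lintegral_mono_ae ?_
      filter_upwards [ae_restrict_mem measurableSet_Ioi] with t ht
      calc ENNReal.ofReal ((finv t) ^ β)
          = c⁻¹ * (ENNReal.ofReal ((finv t) ^ β) * c) := by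
            rw [mul_comm _ c, ← mul_assoc, ENNReal.inv_mul_cancel hc0 hctop, one_mul]
        _ ≤ c⁻¹ * ((volume {x : EuclideanSpace ℝ (Fin d) | t ≤ |V x|}) ^ (β / (d:ℝ))) :=
            mul_le_mul_right (hball t ht) _
    rw [lintegral_const_mul' _ _ (ENNReal.inv_ne_top.mpr hc0)] at hle
    exact lt_of_le_of_lt hle
      (ENNReal.mul_lt_top (lt_top_iff_ne_top.mpr (ENNReal.inv_ne_top.mpr hc0)) hdist)
  exact ⟨hmain, ENNReal.add_lt_top.mpr ⟨ENNReal.ofReal_lt_top, hfin2⟩⟩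
end
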